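/- arXiv:0910.5432 — 3 statements merged into one kernel-verified Lean document; each statement's English description precedes it below -/
import Mathlib

section
/- Let R(z) ∈ C[[z]] and n > k ≥ 0, m ≥ 1. Then Ψ_{1,n}(R(z)/(1−t·z^k)^m) = (1/(m−1)!)·d^{m−1}/dz^{m−1}( z^{m−1}·φ_{n−k}(R(z)) ), where φ_j(∑ r_i z^i) = ∑ r_{ij} z^i. -/
/-!
Expanding `(1 - z^k t)^{-m} = ∑ᵢ C(m-1+i, m-1) z^{ki} tⁱ`, the coefficient of `tⁱ z^{in}` on the
left is `C(m-1+i, m-1) · r_{i(n-k)}`. On the right, `(d/dz)^{m-1}` sends `z^{m-1+i}` to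
`(m-1+i)!/i! · zⁱ`, which after division by `(m-1)!` is the same binomial coefficient.
-/

open PowerSeries

/-- Model of `ℂ⟦t,z⟧` as `ℂ⟦z⟧⟦t⟧`; `Ψ_{1,n}` sends `∑ a_{i,j} tⁱ zʲ` to `∑ᵢ a_{i,i·n} zⁱ`. -/
noncomputable def Psi (n : ℕ) (F : PowerSeries (PowerSeries ℂ)) : PowerSeries ℂ :=
  PowerSeries.mk fun i =>
    PowerSeries.coeff (R := ℂ) (i * n) (PowerSeries.coeff (R := PowerSeries ℂ) i F)

/-- The coefficient-extraction operator `φ_j(∑ rᵢ zⁱ) = ∑ r_{i·j} zⁱ`. -/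
noncomputable def phi (j : ℕ) (F : PowerSeries ℂ) : PowerSeries ℂ :=
  PowerSeries.mk fun i => PowerSeries.coeff (R := ℂ) (i * j) F

namespace PowerSeries

theorem ringInverse_one_sub_C_mul_X_pow_succ {S : Type*} [CommRing S] (a : S) (m : ℕ) :
    Ring.inverse ((1 - C a * X) ^ (m + 1)) = mk fun i => ((m + i).choose m : S) * a ^ i := by
  let u : S⟦X⟧ˣ := Units.map (rescale a).toMonoidHom (invOneSubPow S (m + 1))
  have hu : (u⁻¹ : S⟦X⟧ˣ).val = (1 - C a * X) ^ (m + 1) := by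
    change rescale a (invOneSubPow S (m + 1)).inv = _
    rw [invOneSubPow_inv_eq_one_sub_pow, map_pow, map_sub, map_one, rescale_X]
  rw [← hu, Ring.inverse_unit, inv_inv]
  simp [u, invOneSubPow_val_succ_eq_mk_add_choose, rescale_mk, mul_comm]

theorem coeff_inv_factorial_smul_iterate_derivative_X_pow_mul {K : Type*} [Field K] [CharZero K]
    (f : K⟦X⟧) (m i : ℕ) :
    coeff i ((m.factorial : K)⁻¹ • (d⁄dX K)^[m] (X ^ m * f)) =
      ((m + i).choose m : K) * coeff i f := by
  rw [map_smul, coeff_iterate_derivative, coeff_X_pow_mul, Nat.ascFactorial_eq_factorial_mul_choose,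
    add_comm i m]
  have : (m.factorial : K) ≠ 0 := by exact_mod_cast m.factorial_ne_zero
  push_cast
  rw [smul_eq_mul]
  field_simp

end PowerSeries

theorem Psi_C_mul_mk_C_mul_X_pow_pow (R : ℂ⟦X⟧) (c : ℕ → ℂ) {n k : ℕ} (hkn : k ≤ n) :
    Psi n (C R * mk fun i => C (c i) * (X ^ k) ^ i) = mk fun i => c i * coeff i (phi (n - k) R) := by
  ext i
  have hi : i * n = i * (n - k) + k * i := by
    rw [mul_comm k, ← mul_add, Nat.sub_add_cancel hkn]
  rw [Psi, coeff_mk, coeff_mk, coeff_C_mul, coeff_mk, ← pow_mul, ← mul_assoc, mul_comm R,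
    hi, coeff_mul_X_pow, coeff_C_mul, phi, coeff_mk]

/-- For `n > k ≥ 0` and `m ≥ 1`:
`Ψ_{1,n}(R(z)/(1-t·z^k)ᵐ) = (1/(m-1)!)·(d/dz)^{m-1}(z^{m-1}·φ_{n-k}(R(z)))`. -/
theorem Psi_n_gt_k (R : PowerSeries ℂ) (n k m : ℕ) (hnk : k < n) (hm : 1 ≤ m) :
    Psi n (PowerSeries.C (R := PowerSeries ℂ) R *
        Ring.inverse ((1 - PowerSeries.C (R := PowerSeries ℂ) (PowerSeries.X ^ k) *
          PowerSeries.X) ^ m)) =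
      (((m - 1).factorial : ℂ))⁻¹ •
        (PowerSeries.derivativeFun)^[m - 1]
          (PowerSeries.X ^ (m - 1) * phi (n - k) R) := by
  obtain ⟨m, rfl⟩ := Nat.exists_eq_add_of_le' hm
  have hD : (derivativeFun : ℂ⟦X⟧ → ℂ⟦X⟧) = d⁄dX ℂ := rfl
  rw [Nat.add_sub_cancel, ringInverse_one_sub_C_mul_X_pow_succ]
  calc _ = Psi n (C R * mk fun i => C ((m + i).choose m : ℂ) * (X ^ k) ^ i) := by
        simp only [map_natCast]
    _ = mk fun i => ((m + i).choose m : ℂ) * coeff i (phi (n - k) R) :=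
        Psi_C_mul_mk_C_mul_X_pow_pow R _ hnk.le
    _ = _ := by
        ext i
        rw [hD, coeff_inv_factorial_smul_iterate_derivative_X_pow_mul, coeff_mk]
end

section
/- The formal power series identity ∑_{i≥0} dim(A_i)·z^i = 1/((1−z)^2·(1−z^2)) holds, where A = ker D is the kernel of the Weitzenböck derivation D on K[x_0, x_1, y_0, y_1] defined by D(x_0)=0, D(x_1)=x_0, D(y_0)=0, D(y_1)=y_0, graded by total degree. -/
/-!
Index the variables `x₀, x₁, y₀, y₁` by `0, 1, 2, 3` and let `Δ = x₀ y₁ - x₁ y₀`. The polynomials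
`x₀ᵃ y₀ᵇ Δᶜ` lie in `ker D`, and setting `x₁ = 0` sends them to the distinct monomials
`x₀^(a+c) y₀ᵇ y₁ᶜ`. Conversely, comparing coefficients in `D f = x₀ ∂f/∂x₁ + y₀ ∂f/∂y₁ = 0` shows
that setting `x₁ = 0` is injective on `ker D`, and that it sends `ker D` into the span of the
monomials `x₀ᵃ y₀ᵇ y₁ᶜ` with `c ≤ a`, which are exactly those images. So the degree `n` part of
`ker D` has dimension `#{(a, b, c) | a + b + 2c = n}`, whose generating function is
`1/((1-z)²(1-z²))`.
-/

open Finset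

namespace MvPolynomial
variable {σ R : Type*} [CommSemiring R]

theorem aeval_update_X_zero_monomial [DecidableEq σ] (i : σ) (s : σ →₀ ℕ) (r : R) :
    aeval (Function.update X i 0) (monomial s r) = if s i = 0 then monomial s r else 0 := by
  rw [aeval_monomial, Finsupp.prod]
  split_ifs with h
  · rw [monomial_eq, Finsupp.prod, algebraMap_eq]
    congr 1
    refine Finset.prod_congr rfl fun n hn => ?_
    rw [Function.update_of_ne (by rintro rfl; exact Finsupp.mem_support_iff.mp hn h)]
  · rw [Finset.prod_eq_zero (Finsupp.mem_support_iff.mpr h) (by simp [zero_pow h]), mul_zero]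

theorem coeff_aeval_update_X_zero [DecidableEq σ] (i : σ) (m : σ →₀ ℕ) (f : MvPolynomial σ R) :
    coeff m (aeval (Function.update X i 0) f) = if m i = 0 then coeff m f else 0 := by
  induction f using MvPolynomial.induction_on' with
  | monomial s r =>
    rw [aeval_update_X_zero_monomial]
    by_cases hsm : s = m
    · subst hsm; split_ifs <;> simp
    · split_ifs <;> simp [coeff_monomial, hsm]
  | add p q hp hq => simp only [map_add, coeff_add, hp, hq]; split_ifs <;> simp

theorem coeff_X_mul_pderiv (i j : σ) (m : σ →₀ ℕ) (f : MvPolynomial σ R) :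
    coeff (m + Finsupp.single i 1) (X i * pderiv j f) =
      coeff (m + Finsupp.single j 1) f * (m j + 1) := by
  rw [add_comm, coeff_X_mul, coeff_pderiv]

theorem coeff_X_mul_of_eq_zero {i : σ} {m : σ →₀ ℕ} (h : m i = 0) (f : MvPolynomial σ R) :
    coeff m (X i * f) = 0 := by
  classical
  rw [coeff_X_mul', if_neg (by simpa using h)]

end MvPolynomial

namespace Weitzenbock

section Counting
open PowerSeries

def degreeTriples (n : ℕ) : Finset (ℕ × ℕ × ℕ) :=
  (range (n + 1) ×ˢ range (n + 1) ×ˢ range (n + 1)).filter fun p => p.1 + p.2.1 + 2 * p.2.2 = n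

theorem mem_degreeTriples {n : ℕ} {p : ℕ × ℕ × ℕ} :
    p ∈ degreeTriples n ↔ p.1 + p.2.1 + 2 * p.2.2 = n := by
  simp only [degreeTriples, mem_filter, mem_product, mem_range, and_iff_right_iff_imp]
  omega

theorem card_degreeTriples_add_two (n : ℕ) :
    #(degreeTriples (n + 2)) = #(degreeTriples n) + (n + 3) := by
  rw [← card_filter_add_card_filter_not (fun p : ℕ × ℕ × ℕ => p.2.2 = 0), add_comm,
    ← Finset.Nat.card_antidiagonal (n + 2)]
  congr 1
  · refine card_nbij' (fun p => (p.1, p.2.1, p.2.2 - 1)) (fun p => (p.1, p.2.1, p.2.2 + 1))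
      ?_ ?_ ?_ ?_ <;> simp [Set.MapsTo, Set.LeftInvOn, mem_degreeTriples] <;> omega
  · refine card_nbij' (fun p => (p.1, p.2.1)) (fun q => (q.1, q.2, 0))
      ?_ ?_ ?_ ?_ <;> simp [Set.MapsTo, Set.LeftInvOn, mem_degreeTriples] <;> omega

theorem mk_card_degreeTriples {k : Type*} [Field k] :
    PowerSeries.mk (fun n => (#(degreeTriples n) : k)) = ((1 - X) ^ 2 * (1 - X ^ 2))⁻¹ := by
  rw [PowerSeries.eq_inv_iff_mul_eq_one (by simp)]
  have h : PowerSeries.mk (fun n => (#(degreeTriples n) : k)) * (1 - X ^ 2) =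
      PowerSeries.mk fun n => ((1 + n).choose 1 : k) := by
    have h0 : #(degreeTriples 0) = 1 := by decide
    have h1 : #(degreeTriples 1) = 2 := by decide
    ext (_ | _ | n)
    · simp [h0]
    · norm_num [mul_sub, coeff_mul_X_pow', h1]
    · simp only [mul_sub, mul_one, map_sub, coeff_mk, coeff_mul_X_pow', card_degreeTriples_add_two,
        le_add_iff_nonneg_left, zero_le, if_true, Nat.choose_one_right]
      push_cast
      ring
  calc _ = PowerSeries.mk (fun n => (#(degreeTriples n) : k)) * (1 - X ^ 2) * (1 - X) ^ (1 + 1) :=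
        by ring
    _ = 1 := by rw [h]; exact mk_add_choose_mul_one_sub_pow_eq_one k 1

end Counting

open MvPolynomial Module

noncomputable def exps (a b c d : ℕ) : Fin 4 →₀ ℕ := Finsupp.equivFunOnFinite.symm ![a, b, c, d]

@[simp] theorem exps_apply_zero (a b c d : ℕ) : exps a b c d 0 = a := rfl
@[simp] theorem exps_apply_one (a b c d : ℕ) : exps a b c d 1 = b := rfl
@[simp] theorem exps_apply_two (a b c d : ℕ) : exps a b c d 2 = c := rfl
@[simp] theorem exps_apply_three (a b c d : ℕ) : exps a b c d 3 = d := rfl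

theorem exps_apply_self (m : Fin 4 →₀ ℕ) : exps (m 0) (m 1) (m 2) (m 3) = m := by
  ext j; fin_cases j <;> rfl

theorem exps_add_single_zero (a b c d : ℕ) :
    exps a b c d + Finsupp.single 0 1 = exps (a + 1) b c d := by
  ext j; fin_cases j <;> simp [exps]

theorem exps_add_single_one (a b c d : ℕ) :
    exps a b c d + Finsupp.single 1 1 = exps a (b + 1) c d := by
  ext j; fin_cases j <;> simp [exps]

theorem exps_add_single_two (a b c d : ℕ) :
    exps a b c d + Finsupp.single 2 1 = exps a b (c + 1) d := by
  ext j; fin_cases j <;> simp [exps]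

theorem exps_add_single_three (a b c d : ℕ) :
    exps a b c d + Finsupp.single 3 1 = exps a b c (d + 1) := by
  ext j; fin_cases j <;> simp [exps]

theorem degree_exps (a b c d : ℕ) : (exps a b c d).degree = a + b + c + d := by
  simp [Finsupp.degree_eq_sum, Fin.sum_univ_four]

noncomputable def leadingExp (p : ℕ × ℕ × ℕ) : Fin 4 →₀ ℕ := exps (p.1 + p.2.2) 0 p.2.1 p.2.2

theorem leadingExp_injective : Function.Injective leadingExp := by
  rintro ⟨a, b, c⟩ ⟨a', b', c'⟩ h
  have h0 := congr($h 0)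
  have h2 := congr($h 2)
  have h3 := congr($h 3)
  simp only [leadingExp, exps_apply_zero, exps_apply_two, exps_apply_three] at h0 h2 h3
  simp only [Prod.mk.injEq]
  omega

section CommSemiring
variable {R : Type*} [CommSemiring R]

variable (R) in
noncomputable abbrev weitzenbock : Derivation R (MvPolynomial (Fin 4) R) (MvPolynomial (Fin 4) R) :=
  mkDerivation R ![0, X 0, 0, X 2]

theorem weitzenbock_apply (f : MvPolynomial (Fin 4) R) :
    weitzenbock R f = X 0 * pderiv 1 f + X 2 * pderiv 3 f := by
  have : weitzenbock R = (X 0 : MvPolynomial (Fin 4) R) • pderiv 1 +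
      (X 2 : MvPolynomial (Fin 4) R) • pderiv 3 := by
    refine derivation_ext fun i => ?_
    fin_cases i <;> simp [mkDerivation_X, pderiv_X]
  rw [this]
  rfl

theorem coeff_weitzenbock_exps_succ_succ (a b c d : ℕ) (f : MvPolynomial (Fin 4) R) :
    coeff (exps (a + 1) b (c + 1) d) (weitzenbock R f) =
      coeff (exps a (b + 1) (c + 1) d) f * (b + 1) +
        coeff (exps (a + 1) b c (d + 1)) f * (d + 1) := by
  conv_lhs =>
    rw [weitzenbock_apply, coeff_add, ← exps_add_single_zero a b (c + 1) d, coeff_X_mul_pderiv,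
      exps_add_single_one, exps_add_single_zero, ← exps_add_single_two (a + 1) b c d,
      coeff_X_mul_pderiv, exps_add_single_three]
  simp

theorem coeff_weitzenbock_exps_succ_zero (a b d : ℕ) (f : MvPolynomial (Fin 4) R) :
    coeff (exps (a + 1) b 0 d) (weitzenbock R f) = coeff (exps a (b + 1) 0 d) f * (b + 1) := by
  conv_lhs =>
    rw [weitzenbock_apply, coeff_add, coeff_X_mul_of_eq_zero (i := 2) rfl, add_zero,
      ← exps_add_single_zero, coeff_X_mul_pderiv, exps_add_single_one]
  simp

theorem coeff_weitzenbock_exps_zero_succ (b c d : ℕ) (f : MvPolynomial (Fin 4) R) :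
    coeff (exps 0 b (c + 1) d) (weitzenbock R f) = coeff (exps 0 b c (d + 1)) f * (d + 1) := by
  conv_lhs =>
    rw [weitzenbock_apply, coeff_add, coeff_X_mul_of_eq_zero (i := 0) rfl, zero_add,
      ← exps_add_single_two, coeff_X_mul_pderiv, exps_add_single_three]
  simp

variable (R) in
noncomputable abbrev evalX1Zero : MvPolynomial (Fin 4) R →ₐ[R] MvPolynomial (Fin 4) R :=
  aeval (Function.update X 1 0)

variable [NoZeroDivisors R] [CharZero R] {f : MvPolynomial (Fin 4) R}
  (hf : weitzenbock R f = 0)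
include hf

theorem coeff_exps_eq_zero_of_lt {a b c d : ℕ} (h : a < d) : coeff (exps a b c d) f = 0 := by
  obtain ⟨d, rfl⟩ : ∃ d', d = d' + 1 := ⟨d - 1, by omega⟩
  induction a generalizing b c d with
  | zero =>
    simpa [hf, Nat.cast_add_one_ne_zero] using (coeff_weitzenbock_exps_zero_succ b c d f).symm
  | succ a ih =>
    obtain ⟨d, rfl⟩ : ∃ d', d = d' + 1 := ⟨d - 1, by omega⟩
    have key := coeff_weitzenbock_exps_succ_succ a b c (d + 1) f
    rw [hf, coeff_zero, ih d (by omega), zero_mul, zero_add, eq_comm] at key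
    exact (mul_eq_zero.mp key).resolve_right (Nat.cast_add_one_ne_zero _)

theorem eq_zero_of_forall_coeff_exps_eq_zero (h : ∀ a c d, coeff (exps a 0 c d) f = 0) :
    f = 0 := by
  have hb : ∀ b a c d, coeff (exps a b c d) f = 0 := by
    intro b
    induction b with
    | zero => exact h
    | succ b ih =>
      rintro a (_ | c) d
      · simpa [hf, Nat.cast_add_one_ne_zero] using (coeff_weitzenbock_exps_succ_zero a b d f).symm
      · have key := coeff_weitzenbock_exps_succ_succ a b c d f
        rw [hf, coeff_zero, ih, zero_mul, add_zero, eq_comm] at key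
        simpa [Nat.cast_add_one_ne_zero] using key
  ext m
  rw [← exps_apply_self m]
  exact hb _ _ _ _

theorem eq_zero_of_evalX1Zero_eq_zero (h : evalX1Zero R f = 0) : f = 0 :=
  eq_zero_of_forall_coeff_exps_eq_zero hf fun a c d => by
    have := congr(coeff (exps a 0 c d) $h)
    rwa [coeff_aeval_update_X_zero, exps_apply_one, if_pos rfl, coeff_zero] at this

theorem evalX1Zero_mem_restrictSupport {n : ℕ} (hn : f.IsHomogeneous n) :
    evalX1Zero R f ∈ restrictSupport R ↑((degreeTriples n).image leadingExp) := by
  rw [mem_restrictSupport_iff]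
  intro m hm
  rw [mem_coe, MvPolynomial.mem_support_iff, coeff_aeval_update_X_zero] at hm
  split_ifs at hm with h1
  · have hdeg : m.degree = n := by
      by_contra h; exact hm (hn.coeff_eq_zero h)
    have h30 : m 3 ≤ m 0 := by
      by_contra h
      rw [← exps_apply_self m] at hm
      exact hm (coeff_exps_eq_zero_of_lt hf (by omega))
    rw [← exps_apply_self m, degree_exps] at hdeg
    simp only [coe_image, Set.mem_image, mem_coe, mem_degreeTriples]
    refine ⟨(m 0 - m 3, m 2, m 3), by dsimp only; omega, ?_⟩
    rw [leadingExp, ← h1, Nat.sub_add_cancel h30, exps_apply_self]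
  · exact absurd rfl hm

end CommSemiring

section CommRing
variable {R : Type*} [CommRing R]

variable (R) in
noncomputable def invariant (p : ℕ × ℕ × ℕ) : MvPolynomial (Fin 4) R :=
  X 0 ^ p.1 * X 2 ^ p.2.1 * (X 0 * X 3 - X 1 * X 2) ^ p.2.2

theorem weitzenbock_invariant (p : ℕ × ℕ × ℕ) : weitzenbock R (invariant R p) = 0 := by
  have hX (i : Fin 4) : weitzenbock R (X i) = ![0, X 0, 0, X 2] i := mkDerivation_X R _ i
  simp only [invariant, Derivation.leibniz, Derivation.leibniz_pow, map_sub, hX]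
  simp only [Fin.isValue, Matrix.cons_val, smul_eq_mul]
  ring

theorem isHomogeneous_invariant {n : ℕ} {p : ℕ × ℕ × ℕ} (hp : p ∈ degreeTriples n) :
    (invariant R p).IsHomogeneous n := by
  have hΔ : (X 0 * X 3 - X 1 * X 2 : MvPolynomial (Fin 4) R).IsHomogeneous 2 :=
    ((isHomogeneous_X R 0).mul (isHomogeneous_X R 3)).sub
      ((isHomogeneous_X R 1).mul (isHomogeneous_X R 2))
  have h := (((isHomogeneous_X R 0).pow p.1).mul ((isHomogeneous_X R 2).pow p.2.1)).mul
    (hΔ.pow p.2.2)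
  rwa [one_mul, one_mul, mem_degreeTriples.mp hp] at h

theorem monomial_exps_one (a b c d : ℕ) :
    monomial (exps a b c d) (1 : R) = X 0 ^ a * X 1 ^ b * X 2 ^ c * X 3 ^ d := by
  simp only [X_pow_eq_monomial, monomial_mul, mul_one]
  refine congrArg (monomial · 1) ?_
  ext j; fin_cases j <;> simp [exps]

theorem evalX1Zero_invariant (p : ℕ × ℕ × ℕ) :
    evalX1Zero R (invariant R p) = monomial (leadingExp p) 1 := by
  rw [leadingExp, monomial_exps_one]
  simp only [invariant, map_mul, map_pow, map_sub, aeval_X, Function.update_apply, Fin.reduceEq,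
    if_true, if_false, zero_mul, sub_zero]
  ring

variable [NoZeroDivisors R] [CharZero R]

theorem map_evalX1Zero_homogeneousSubmodule_inf_ker (n : ℕ) :
    (homogeneousSubmodule (Fin 4) R n ⊓ LinearMap.ker (weitzenbock R).toLinearMap).map
      (evalX1Zero R).toLinearMap = restrictSupport R ↑((degreeTriples n).image leadingExp) := by
  refine le_antisymm ?_ ?_
  · rintro _ ⟨f, ⟨hhom, hker⟩, rfl⟩
    exact evalX1Zero_mem_restrictSupport hker hhom
  · rw [restrictSupport_eq_span, Submodule.span_le]
    rintro _ ⟨_, hm, rfl⟩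
    obtain ⟨p, hp, rfl⟩ := mem_image.mp hm
    exact ⟨invariant R p, ⟨isHomogeneous_invariant hp, weitzenbock_invariant p⟩,
      evalX1Zero_invariant p⟩

theorem finrank_homogeneousSubmodule_inf_ker (n : ℕ) :
    finrank R ↥(homogeneousSubmodule (Fin 4) R n ⊓ LinearMap.ker (weitzenbock R).toLinearMap) =
      #(degreeTriples n) := by
  set P := homogeneousSubmodule (Fin 4) R n ⊓ LinearMap.ker (weitzenbock R).toLinearMap
  have hinj : Function.Injective ((evalX1Zero R).toLinearMap.domRestrict P) := by
    rw [← LinearMap.ker_eq_bot, LinearMap.ker_eq_bot']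
    rintro ⟨f, hf⟩ h
    exact Subtype.ext (eq_zero_of_evalX1Zero_eq_zero hf.2 h)
  rw [← LinearMap.finrank_range_of_inj hinj, LinearMap.range_domRestrict,
    map_evalX1Zero_homogeneousSubmodule_inf_ker,
    finrank_eq_card_basis (basisRestrictSupport R _)]
  simp [card_image_of_injective _ leadingExp_injective]

end CommRing

end Weitzenbock

/-- The Poincaré series of the kernel of the Weitzenböck derivation `D` on
`K[x₀,x₁,y₀,y₁]` with `D x₀ = 0`, `D x₁ = x₀`, `D y₀ = 0`, `D y₁ = y₀` (graded by total
degree) equals `1/((1-z)²(1-z²))`. -/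
theorem poincare_series_ker_D11 (K : Type) [Field K] [CharZero K]
    (D : Derivation K (MvPolynomial (Fin 4) K) (MvPolynomial (Fin 4) K))
    (hD : D = MvPolynomial.mkDerivation K
      ![0, MvPolynomial.X 0, 0, MvPolynomial.X 2]) :
    (PowerSeries.mk fun i =>
        (Module.finrank K
          ↥(MvPolynomial.homogeneousSubmodule (Fin 4) K i ⊓
            LinearMap.ker D.toLinearMap) : ℚ)) =
      (((1 : PowerSeries ℚ) - PowerSeries.X) ^ 2 *
        ((1 : PowerSeries ℚ) - PowerSeries.X ^ 2))⁻¹ := by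
  subst hD
  simp only [Weitzenbock.finrank_homogeneousSubmodule_inf_ker]
  exact Weitzenbock.mk_card_degreeTriples
end

section
/- For n ≥ 1, the rational function ∑_{k=1}^{n} ((−1)^{n−k}/((k−1)!·(n−k)!))·(n)_{n−k} · d^{k−1}/dz^{k−1}( (1+z)·z^{2n−k−1}/(1−z^2)^{2n−k} ), where (n)_m is the rising factorial, has nonnegative integer Taylor coefficients at z = 0; for n = 2 it equals 1/((1−z)^2(1−z^2)). -/
/-!
Differentiating `k - 1` times and expanding
`(1 + z) z^p / (1 - z²)^(p+1) = ∑ₘ C(⌊(m + p)/2⌋, p) zᵐ`, the coefficient of `zⁱ` in the `k`-th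
summand factors as `C(q + n - 1, q) · (-1)^(n-k) C(q, n - k) C(i + k - 1, i)` with `q = ⌊i/2⌋`.
The alternating sum over `k` that remains is the coefficient of `z^(n-1)` in
`(1 - z)^q · (1 - z)^(-(i+1)) = (1 - z)^(-(⌈i/2⌉+1))`, so the `i`-th coefficient of the series is
`C(⌊i/2⌋ + n - 1, n - 1) · C(⌈i/2⌉ + n - 1, n - 1)`. For `n = 2` these are the coefficients
`(⌊i/2⌋ + 1)(⌈i/2⌉ + 1)` of `1/((1 - z)²(1 - z²))`.
-/

open PowerSeries Finset

namespace PowerSeries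

section CommRing

variable {R : Type*} [CommRing R]

theorem coeff_one_sub_X_pow (q j : ℕ) :
    coeff j ((1 - X : R⟦X⟧) ^ q) = (-1) ^ j * q.choose j := by
  have h : (1 - X : R⟦X⟧) ^ q =
      rescale (-1 : R) (((1 + Polynomial.X) ^ q : Polynomial R) : R⟦X⟧) := by
    simp [sub_eq_add_neg]
  rw [h, coeff_rescale, Polynomial.coeff_coe, Polynomial.coeff_one_add_X_pow]

theorem sum_antidiagonal_neg_one_pow_mul_choose_mul_choose (q r m : ℕ) :
    ∑ p ∈ antidiagonal m, (-1 : R) ^ p.1 * q.choose p.1 * (q + r + p.2).choose (q + r) =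
      (r + m).choose r := by
  have h := congrArg (coeff m)
    (one_sub_pow_mul_invOneSubPow_val_add_eq_invOneSubPow_val R (r + 1) q)
  rw [show r + 1 + q = q + r + 1 by ring, invOneSubPow_val_succ_eq_mk_add_choose,
    invOneSubPow_val_succ_eq_mk_add_choose, coeff_mul, coeff_mk] at h
  simpa [coeff_one_sub_X_pow, mul_assoc] using h

theorem mk_choose_half_succ_mul_one_sub_X_sq (p : ℕ) :
    (PowerSeries.mk fun m => (((m + (p + 1)) / 2).choose (p + 1) : R)) * (1 - X ^ 2) =
      X * PowerSeries.mk fun m => (((m + p) / 2).choose p : R) := by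
  ext m
  rw [mul_sub, mul_one, map_sub, coeff_mul_X_pow', coeff_mk]
  rcases m with _ | _ | m
  · simp [Nat.choose_eq_zero_of_lt (show (p + 1) / 2 < p + 1 by omega)]
  · rw [coeff_succ_X_mul, coeff_mk, show (1 + (p + 1)) / 2 = p / 2 + 1 by omega,
      Nat.choose_succ_succ, Nat.choose_eq_zero_of_lt (show p / 2 < p + 1 by omega)]
    simp
  · rw [coeff_succ_X_mul, coeff_mk, if_pos (by omega), coeff_mk,
      show (m + 2 + (p + 1)) / 2 = (m + 1 + p) / 2 + 1 by omega,
      show (m + 2 - 2 + (p + 1)) / 2 = (m + 1 + p) / 2 by omega, Nat.choose_succ_succ]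
    push_cast
    ring

theorem mk_choose_half_mul_one_sub_X_sq_pow (p : ℕ) :
    (PowerSeries.mk fun m => (((m + p) / 2).choose p : R)) * (1 - X ^ 2) ^ (p + 1) =
      (1 + X) * X ^ p := by
  induction p with
  | zero =>
    have h : (PowerSeries.mk fun m => (((m + 0) / 2).choose 0 : R)) = PowerSeries.mk 1 := by
      ext; simp
    rw [h, zero_add, pow_one, pow_zero, mul_one,
      show (1 - X ^ 2 : R⟦X⟧) = (1 - X) * (1 + X) by ring, ← mul_assoc,
      mk_one_mul_one_sub_eq_one, one_mul]
  | succ p ih =>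
    rw [pow_succ', ← mul_assoc, mk_choose_half_succ_mul_one_sub_X_sq, mul_assoc, ih]
    ring

end CommRing

theorem coeff_one_add_X_mul_X_pow_mul_inv {k : Type*} [Field k] (p m : ℕ) :
    coeff m ((1 + X) * X ^ p * ((1 - X ^ 2 : k⟦X⟧) ^ (p + 1))⁻¹) =
      (((m + p) / 2).choose p : k) := by
  rw [← (eq_mul_inv_iff_mul_eq (by simp)).mpr (mk_choose_half_mul_one_sub_X_sq_pow p), coeff_mk]

end PowerSeries

theorem Nat.add_choose_add_mul_add_choose (q m j : ℕ) :
    (q + m).choose (m + j) * (m + j).choose j = (q + m).choose q * q.choose j := by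
  rw [← Nat.choose_symm_add, Nat.choose_mul (Nat.le_add_right m j), Nat.add_sub_cancel,
    Nat.add_sub_cancel_left, Nat.choose_symm_add]

noncomputable def poincareSummand (n k : ℕ) : ℚ⟦X⟧ :=
  ((-1 : ℚ) ^ (n - k) * n.ascFactorial (n - k) / ((k - 1).factorial * (n - k).factorial)) •
    (d⁄dX ℚ)^[k - 1] ((1 + X) * X ^ (2 * n - k - 1) * ((1 - X ^ 2) ^ (2 * n - k))⁻¹)

theorem coeff_poincareSummand {n k : ℕ} (hk : k ∈ Icc 1 n) (i : ℕ) :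
    coeff i (poincareSummand n k) = ((i / 2 + (n - 1)).choose (i / 2) : ℚ) *
      ((-1) ^ (n - k) * (i / 2).choose (n - k) * (i + (k - 1)).choose i) := by
  obtain ⟨l, j, rfl, rfl⟩ : ∃ l j, k = l + 1 ∧ n = l + 1 + j :=
    ⟨k - 1, n - k, by grind, by grind⟩
  have hG := coeff_one_add_X_mul_X_pow_mul_inv (k := ℚ) (l + 2 * j) (i + l)
  rw [show (i + l + (l + 2 * j)) / 2 = i / 2 + (l + j) by omega] at hG
  rw [poincareSummand, show 2 * (l + 1 + j) - (l + 1) = l + 2 * j + 1 by omega,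
    show l + 1 + j - (l + 1) = j by omega, show l + 1 + j - 1 = l + j by omega,
    Nat.add_sub_cancel, Nat.add_sub_cancel, coeff_smul, smul_eq_mul, coeff_iterate_derivative, hG,
    Nat.ascFactorial_eq_factorial_mul_choose, Nat.ascFactorial_eq_factorial_mul_choose',
    show l + 1 + j + j - 1 = l + 2 * j by omega]
  have key : ((i / 2 + (l + j)).choose (l + 2 * j) * (l + 2 * j).choose j : ℚ) =
      (i / 2 + (l + j)).choose (i / 2) * (i / 2).choose j := by
    exact_mod_cast two_mul j ▸ add_assoc l j j ▸
      Nat.add_choose_add_mul_add_choose (i / 2) (l + j) j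
  rw [← Nat.choose_symm_add]
  push_cast
  field_simp
  linear_combination ((i + l).choose i : ℚ) * key

noncomputable def poincareSeries (n : ℕ) : ℚ⟦X⟧ :=
  ∑ k ∈ Icc 1 n, poincareSummand n k

theorem coeff_poincareSeries {n : ℕ} (hn : 1 ≤ n) (i : ℕ) :
    coeff i (poincareSeries n) =
      ((i / 2 + (n - 1)).choose (i / 2) * ((i + 1) / 2 + (n - 1)).choose ((i + 1) / 2) : ℕ) := by
  have hi : i / 2 + (i + 1) / 2 = i := by omega
  rw [poincareSeries, map_sum, sum_congr rfl fun k hk => coeff_poincareSummand hk i, ← mul_sum,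
    Nat.cast_mul,
    ← sum_antidiagonal_neg_one_pow_mul_choose_mul_choose (i / 2) ((i + 1) / 2) (n - 1), hi]
  congr 1
  refine sum_nbij' (fun k => (n - k, k - 1)) (fun p => p.2 + 1) ?_ ?_ ?_ ?_ ?_ <;>
    simp only [mem_Icc, Finset.HasAntidiagonal.mem_antidiagonal, Prod.forall, Prod.mk.injEq,
      implies_true] <;> omega

theorem poincareSeries_two :
    poincareSeries 2 = ((1 - X) ^ 2 * (1 - X ^ 2) : ℚ⟦X⟧)⁻¹ := by
  have hc (i : ℕ) : coeff i (poincareSeries 2) = ((i / 2 + 1) * ((i + 1) / 2 + 1) : ℕ) := by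
    rw [coeff_poincareSeries one_le_two, show 2 - 1 = 1 from rfl, Nat.choose_succ_self_right,
      Nat.choose_succ_self_right]
  rw [eq_inv_iff_mul_eq_one (by simp)]
  ext m
  rw [show poincareSeries 2 * ((1 - X) ^ 2 * (1 - X ^ 2)) = poincareSeries 2 -
      poincareSeries 2 * X ^ 1 - poincareSeries 2 * X ^ 1 + poincareSeries 2 * X ^ 3 +
      poincareSeries 2 * X ^ 3 - poincareSeries 2 * X ^ 4 by ring]
  simp only [map_sub, map_add, coeff_mul_X_pow', hc, coeff_one]
  rcases lt_or_ge m 4 with hm | hm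
  · interval_cases m <;> norm_num
  · obtain ⟨j, rfl⟩ := Nat.exists_eq_add_of_le' hm
    rw [if_pos (by omega), if_pos (by omega), if_pos (by omega), if_neg (by omega),
      show (j + 4 - 1) / 2 = (j + 1) / 2 + 1 by omega,
      show (j + 4 - 1 + 1) / 2 = j / 2 + 2 by omega,
      show (j + 4 - 3) / 2 = (j + 1) / 2 by omega, show (j + 4 - 3 + 1) / 2 = j / 2 + 1 by omega,
      show j + 4 - 4 = j by omega, show (j + 4) / 2 = j / 2 + 2 by omega,
      show (j + 4 + 1) / 2 = (j + 1) / 2 + 2 by omega]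
    push_cast
    ring

/-- For `n ≥ 1`, the series
`∑_{k=1}^n ((-1)^{n-k}/((k-1)!(n-k)!))·(n)_{n-k} · d^{k-1}/dz^{k-1}((1+z)·z^{2n-k-1}/(1-z²)^{2n-k})`
(the Poincaré series of the kernel of the Weitzenböck derivation with `n` Jordan blocks of
size 2) has nonnegative integer Taylor coefficients at `z = 0`; for `n = 2` it equals
`1/((1-z)²(1-z²))`. -/
theorem poincare_ones (n : ℕ) (hn : 1 ≤ n) (P : PowerSeries ℚ)
    (hP : P = ∑ k ∈ Finset.Icc 1 n,
      (((-1 : ℚ) ^ (n - k) * (Nat.ascFactorial n (n - k) : ℚ) /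
          (((k - 1).factorial : ℚ) * ((n - k).factorial : ℚ))) •
        (PowerSeries.derivativeFun)^[k - 1]
          ((1 + PowerSeries.X) * PowerSeries.X ^ (2 * n - k - 1) *
            ((((1 : PowerSeries ℚ) - PowerSeries.X ^ 2) ^ (2 * n - k))⁻¹)))) :
    (∀ i : ℕ, ∃ c : ℕ, PowerSeries.coeff i P = (c : ℚ)) ∧
      (n = 2 → P = (((1 : PowerSeries ℚ) - PowerSeries.X) ^ 2 *
        ((1 : PowerSeries ℚ) - PowerSeries.X ^ 2))⁻¹) := by
  obtain rfl : P = poincareSeries n := hP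
  refine ⟨fun i => ⟨_, coeff_poincareSeries hn i⟩, ?_⟩
  rintro rfl
  exact poincareSeries_two
end
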